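/- (Theorem 8, correction part) Let n ≥ 5 be prime. Then the code C_{G_4} is a binary double-node-erasure-correcting code: for any two distinct indices i, j ∈ [n], any two labelings in C_{G_4} that agree on all ordered pairs (k,ℓ) with k ∉ {i,j} and ℓ ∉ {i,j} are equal. -/

import Mathlib

/-
The difference `D = L1 - L2` is a codeword vanishing off the edges at `i` and `j`. Its lower and
upper triangles (both containing the self-loops) are each governed by half of the parity checks,
the two halves differing by an exchange of the special nodes `c = n-2` and `c' = n-1`; the
triangles interact only through the loops at `i` and `j`.

Restricted to edges at `i` and `j`, a neighbourhood check at `h` says `D(i,h) = D(j,h)` and a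
diagonal check says `D(i,a) = D(j,b)` whenever `i + a = j + b`. Walking along `j, j + d, j + 2d, …`
with `d = j - i`, which visits every node because `n` is prime and ends at `i`, these identities
alternate, so the walk carries a constant value except where `c` or `c'` interrupts it; next to `c`
a diagonal check loses a term and forces a zero. Whichever of `c`, `c'` comes first on the walk,
one triangle forces the loop at `j` to vanish and the other the loop at `i`, and then every value
on both walks vanishes; the values at `c` and `c'` follow from the neighbourhood checks of `i` and
`j`. When `i` or `j` is itself special no walk is needed: the diagonal checks through `c` lose
their `i`-term outright.
-/

open Finset

/-- The code `C_{G_4}`: labelings `L : [n]×[n] → F_2` of the complete directed graph with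
self-loops such that (a) for `h ∈ [n-2]` the sum of `L` over the neighborhood-edge set
`S↓_h = {down edge of {h,ℓ} : ℓ ∈ [n-1]}` is `0`; (b) for `m ∈ [n]` the sum over the
diagonal-edge set `D↓_m = {down edge of {k,ℓ} : k,ℓ ∈ [n]\{n-2}, ⟨k+ℓ⟩_n = m} ∪ {(n-1,n-2)}`
is `0`; (c) for `h ∈ [n-2]` the sum over `S↑_h = {up edge of {h,ℓ} : ℓ ∈ [n]\{n-2}}` is `0`;
and (d) for `m ∈ [n]` the sum over
`D↑_m = {up edge of {k,ℓ} : k,ℓ ∈ [n-1], ⟨k+ℓ⟩_n = m} ∪ {(n-2,n-1)}` is `0`.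
Each edge in a set is counted once; downward edges are the ordered pairs `(k,ℓ)` with
`ℓ ≤ k` and upward edges those with `k ≤ ℓ`. -/
def CG4 (n : ℕ) (hn : 5 ≤ n) : Set (Fin n → Fin n → ZMod 2) :=
  {L |
    (∀ h : Fin n, (h : ℕ) < n - 2 →
      ∑ ℓ ∈ univ.filter (fun ℓ : Fin n => (ℓ : ℕ) < n - 1),
        L (max h ℓ) (min h ℓ) = 0) ∧
    (∀ m : ℕ, m < n →
      (∑ p ∈ univ.filter (fun p : Fin n × Fin n =>
          (p.2 : ℕ) ≤ (p.1 : ℕ) ∧ (p.1 : ℕ) ≠ n - 2 ∧ (p.2 : ℕ) ≠ n - 2 ∧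
            ((p.1 : ℕ) + (p.2 : ℕ)) % n = m),
          L p.1 p.2) + L ⟨n - 1, by omega⟩ ⟨n - 2, by omega⟩ = 0) ∧
    (∀ h : Fin n, (h : ℕ) < n - 2 →
      ∑ ℓ ∈ univ.filter (fun ℓ : Fin n => (ℓ : ℕ) ≠ n - 2),
        L (min h ℓ) (max h ℓ) = 0) ∧
    (∀ m : ℕ, m < n →
      (∑ p ∈ univ.filter (fun p : Fin n × Fin n =>
          (p.1 : ℕ) ≤ (p.2 : ℕ) ∧ (p.1 : ℕ) < n - 1 ∧ (p.2 : ℕ) < n - 1 ∧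
            ((p.1 : ℕ) + (p.2 : ℕ)) % n = m),
          L p.1 p.2) + L ⟨n - 2, by omega⟩ ⟨n - 1, by omega⟩ = 0)}

namespace CG4

section Triangles

variable {α M : Type*} [LinearOrder α]

lemma mk_sup_inf (z : Sym2 α) : s(z.sup, z.inf) = z := by
  induction z using Sym2.ind with
  | _ a b => rcases le_total a b with h | h <;> simp [h, Sym2.eq_swap]

def lowerHalf (L : α → α → M) (z : Sym2 α) : M := L z.sup z.inf

@[simp] lemma lowerHalf_mk (L : α → α → M) (a b : α) :
    lowerHalf L s(a, b) = L (max a b) (min a b) :=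
  rfl

lemma lowerHalf_flip_mk_self (L : α → α → M) (a : α) :
    lowerHalf (flip L) s(a, a) = lowerHalf L s(a, a) := by
  simp [flip]

section Zero

variable [Zero M] {D : α → α → M}

lemma lowerHalf_eq_zero {i j : α} (hD : ∀ k ℓ, k ≠ i → k ≠ j → ℓ ≠ i → ℓ ≠ j → D k ℓ = 0)
    {z : Sym2 α} (hi : i ∉ z) (hj : j ∉ z) : lowerHalf D z = 0 := by
  induction z using Sym2.ind with
  | _ a b =>
    simp only [Sym2.mem_iff, not_or] at hi hj
    rw [lowerHalf_mk]
    apply hD <;> rcases max_choice a b with h | h <;> rcases min_choice a b with h' | h' <;>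
      simp only [h, h'] <;> tauto

lemma eq_zero_of_lowerHalf_eq_zero (h : lowerHalf D = 0) (h' : lowerHalf (flip D) = 0) :
    D = 0 := by
  funext k ℓ
  rcases le_total ℓ k with hkℓ | hkℓ
  · simpa [hkℓ] using congrFun h s(k, ℓ)
  · simpa [hkℓ, flip] using congrFun h' s(k, ℓ)

end Zero

variable [Fintype α] [AddCommMonoid M]

lemma sum_filter_snd_le_fst_eq_sum_sym2 (f : α → α → M) (P : Sym2 α → Prop) [DecidablePred P] :
    ∑ p ∈ univ.filter (fun p : α × α => p.2 ≤ p.1 ∧ P s(p.1, p.2)), f p.1 p.2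
      = ∑ z ∈ univ.filter P, lowerHalf f z := by
  refine sum_nbij' (fun p => s(p.1, p.2)) (fun z => (z.sup, z.inf)) ?_ ?_ ?_ ?_ ?_
  · intro p hp; simp_all
  · intro z hz; simp_all [Sym2.inf_le_sup, mk_sup_inf]
  · rintro ⟨a, b⟩ hp; simp_all
  · intro z _; exact mk_sup_inf z
  · rintro ⟨a, b⟩ hp; simp_all

lemma sum_filter_fst_le_snd_eq_sum_sym2 (f : α → α → M) (P : Sym2 α → Prop) [DecidablePred P] :
    ∑ p ∈ univ.filter (fun p : α × α => p.1 ≤ p.2 ∧ P s(p.1, p.2)), f p.1 p.2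
      = ∑ z ∈ univ.filter P, lowerHalf (flip f) z := by
  refine Eq.trans ?_ (sum_filter_snd_le_fst_eq_sum_sym2 (flip f) P)
  refine sum_nbij' Prod.swap Prod.swap ?_ ?_ (fun _ _ => rfl) (fun _ _ => rfl) fun _ _ => rfl
  · rintro ⟨a, b⟩ hp; simp_all [Sym2.eq_swap]
  · rintro ⟨a, b⟩ hp; simp_all [Sym2.eq_swap]

end Triangles

section HalfCode

variable {G : Type*} [AddCommGroup G]

def pairSum (z : Sym2 G) : G := Sym2.lift ⟨(· + ·), add_comm⟩ z

@[simp] lemma pairSum_mk (a b : G) : pairSum s(a, b) = a + b := rfl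

lemma eq_mk_of_mem_of_pairSum_eq {z : Sym2 G} {x y : G} (hx : x ∈ z) (h : pairSum z = x + y) :
    z = s(x, y) := by
  obtain ⟨w, rfl⟩ := Sym2.mem_iff_exists.mp hx
  rw [pairSum_mk, add_right_inj] at h
  rw [h]

variable [DecidableEq G] [Fintype G]

/-- The parity checks on one triangle of a labeling, read as a function `X` on unordered pairs
(self-loops included). For `X = lowerHalf L`, `c = n-2` and `c' = n-1` the two fields are
conditions (a) and (b) of `CG4`; for `X = lowerHalf (flip L)` with `c` and `c'` exchanged they are
(c) and (d). -/
structure IsHalfCodeword (c c' : G) (X : Sym2 G → ZMod 2) : Prop where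
  nbhd : ∀ h, h ≠ c → h ≠ c' → ∑ ℓ ∈ univ.filter (· ≠ c'), X s(h, ℓ) = 0
  diag : ∀ m, ∑ z ∈ univ.filter (fun z => c ∉ z ∧ pairSum z = m), X z + X s(c, c') = 0

lemma IsHalfCodeword.sub {c c' : G} {X Y : Sym2 G → ZMod 2} (hX : IsHalfCodeword c c' X)
    (hY : IsHalfCodeword c c' Y) : IsHalfCodeword c c' (X - Y) where
  nbhd h hc hc' := by
    simp only [Pi.sub_apply, sum_sub_distrib, hX.nbhd h hc hc', hY.nbhd h hc hc', sub_zero]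
  diag m := by
    simp only [Pi.sub_apply, sum_sub_distrib]
    linear_combination hX.diag m - hY.diag m

end HalfCode

section ErasedHalf

variable {G : Type*} [AddCommGroup G] [DecidableEq G] [Fintype G]

structure IsErasedHalf (I J c c' : G) (X : Sym2 G → ZMod 2) : Prop
    extends IsHalfCodeword c c' X where
  ne : I ≠ J
  vanishesAway : ∀ z, I ∉ z → J ∉ z → X z = 0

namespace IsErasedHalf

variable {I J c c' : G} {X : Sym2 G → ZMod 2}

lemma swap (H : IsErasedHalf I J c c' X) : IsErasedHalf J I c c' X :=
  { H with
    ne := H.ne.symm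
    vanishesAway := fun z hJ hI => H.vanishesAway z hI hJ }

lemma eq_zero (H : IsErasedHalf I J c c' X) (hI : ∀ a, X s(I, a) = 0)
    (hJ : ∀ b, X s(J, b) = 0) : X = 0 := by
  funext z
  induction z using Sym2.ind with
  | _ a b =>
    by_cases ha : a = I
    · rw [ha, hI]; rfl
    by_cases ha' : a = J
    · rw [ha', hJ]; rfl
    by_cases hb : b = I
    · rw [hb, Sym2.eq_swap, hI]; rfl
    by_cases hb' : b = J
    · rw [hb', Sym2.eq_swap, hJ]; rfl
    exact H.vanishesAway _ (by simp [Sym2.mem_iff, Ne.symm ha, Ne.symm hb])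
      (by simp [Sym2.mem_iff, Ne.symm ha', Ne.symm hb'])

lemma apply_eq_zero_of_nbhd (H : IsErasedHalf I J c c' X) {h t : G} (hc : h ≠ c)
    (hc' : h ≠ c') (ht : t ≠ c') (hzero : ∀ ℓ, ℓ ≠ c' → ℓ ≠ t → X s(h, ℓ) = 0) :
    X s(h, t) = 0 := by
  have := H.nbhd h hc hc'
  rwa [sum_eq_single_of_mem t (by simpa using ht)
    (fun ℓ hℓ hne => hzero ℓ (by simpa using hℓ) hne)] at this

lemma nbhd_cross (H : IsErasedHalf I J c c' X) {h : G} (hI : h ≠ I) (hJ : h ≠ J)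
    (hc : h ≠ c) (hc' : h ≠ c') :
    (if I ≠ c' then X s(I, h) else 0) + (if J ≠ c' then X s(J, h) else 0) = 0 := by
  have := H.nbhd h hc hc'
  rw [sum_filter, Fintype.sum_eq_add I J H.ne] at this
  · simpa only [Sym2.eq_swap (a := h)] using this
  · rintro ℓ ⟨hℓI, hℓJ⟩
    rw [H.vanishesAway _ (by simp [Sym2.mem_iff, Ne.symm hI, Ne.symm hℓI])
      (by simp [Sym2.mem_iff, Ne.symm hJ, Ne.symm hℓJ]), ite_self]

lemma cross_eq (H : IsErasedHalf I J c c' X) (hIc' : I ≠ c') (hJc' : J ≠ c') {h : G}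
    (hI : h ≠ I) (hJ : h ≠ J) (hc : h ≠ c) (hc' : h ≠ c') : X s(I, h) = X s(J, h) := by
  simpa [hIc', hJc', CharTwo.add_eq_zero] using H.nbhd_cross hI hJ hc hc'

lemma cross_eq_zero (H : IsErasedHalf I J c c' X) (hJc' : J = c') {h : G}
    (hI : h ≠ I) (hJ : h ≠ J) (hc : h ≠ c) : X s(I, h) = 0 := by
  have hIc' : I ≠ c' := hJc' ▸ H.ne
  simpa [hIc', hJc'] using H.nbhd_cross hI hJ hc (hJc' ▸ hJ)

lemma apply_eq_zero_of_pairSum_eq (H : IsErasedHalf I J c c' X) {a b : G} (hab : I + a = J + b)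
    {z : Sym2 G} (hz : pairSum z = I + a) (hzI : z ≠ s(I, a)) (hzJ : z ≠ s(J, b)) :
    X z = 0 := by
  by_cases hI : I ∈ z
  · exact absurd (eq_mk_of_mem_of_pairSum_eq hI hz) hzI
  by_cases hJ : J ∈ z
  · exact absurd (eq_mk_of_mem_of_pairSum_eq hJ (hz.trans hab)) hzJ
  exact H.vanishesAway z hI hJ

lemma diag_cross (H : IsErasedHalf I J c c' X) {a b : G} (hab : I + a = J + b) (ha : a ≠ J) :
    (if c ∉ s(I, a) then X s(I, a) else 0) + (if c ∉ s(J, b) then X s(J, b) else 0)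
      + X s(c, c') = 0 := by
  have hne : s(I, a) ≠ s(J, b) := by simp [H.ne, ha]
  have := H.diag (I + a)
  rw [sum_filter, Fintype.sum_eq_add _ _ hne] at this
  · simpa [hab] using this
  · rintro z ⟨hzI, hzJ⟩
    exact ite_eq_right_iff.mpr fun hz => H.apply_eq_zero_of_pairSum_eq hab hz.2 hzI hzJ

lemma diag_pair (H : IsErasedHalf I J c c' X) :
    (if c ∉ s(I, J) then X s(I, J) else 0) + X s(c, c') = 0 := by
  have := H.diag (I + J)
  rw [sum_filter, Fintype.sum_eq_single s(I, J)] at this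
  · simpa using this
  · intro z hz
    exact ite_eq_right_iff.mpr fun h =>
      H.apply_eq_zero_of_pairSum_eq (add_comm I J) h.2 hz (by rwa [Sym2.eq_swap])

lemma apply_right_eq_extra (H : IsErasedHalf I J c c' X) {a b : G} (hab : I + a = J + b)
    (ha : a ≠ J) (hca : c ∈ s(I, a)) (hcb : c ∉ s(J, b)) : X s(J, b) = X s(c, c') := by
  simpa [hca, hcb, CharTwo.add_eq_zero] using H.diag_cross hab ha

lemma add_eq_extra (H : IsErasedHalf I J c c' X) {a b : G} (hab : I + a = J + b)
    (ha : a ≠ J) (hca : c ∉ s(I, a)) (hcb : c ∉ s(J, b)) :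
    X s(I, a) + X s(J, b) = X s(c, c') := by
  simpa [hca, hcb, CharTwo.add_eq_zero] using H.diag_cross hab ha

lemma extra_eq_zero (H : IsErasedHalf I J c c' X) (hc : c ∈ s(I, J)) : X s(c, c') = 0 := by
  simpa [hc] using H.diag_pair

lemma apply_right_eq_zero_of_eq (H : IsErasedHalf I J c c' X) (hI : I = c) {b : G}
    (hb : b ≠ I) : X s(J, b) = 0 := by
  rw [H.apply_right_eq_extra (a := b + (J - I)) (by abel)
    (fun h => hb ((eq_sub_of_add_eq h).trans (sub_sub_cancel J I)))
    (by simp [hI]) (by simp [Sym2.mem_iff, ← hI, H.ne, Ne.symm hb]),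
    H.extra_eq_zero (by simp [hI])]

end IsErasedHalf

end ErasedHalf

section Walk

variable {G : Type*} [AddCommGroup G]

def chain (I J : G) (r : ℕ) : G := J + r • (J - I)

variable {I J : G}

@[simp] lemma chain_zero : chain I J 0 = J := by simp [chain]

lemma add_chain_succ (r : ℕ) : I + chain I J (r + 1) = J + chain I J r := by
  simp only [chain, succ_nsmul]; abel

lemma chain_card_sub_one [Finite G] : chain I J (Nat.card G - 1) = I := by
  have h : (Nat.card G - 1 + 1) • (J - I) = 0 := by
    rw [Nat.sub_add_cancel Nat.card_pos]; exact card_nsmul_eq_zero'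
  rw [succ_nsmul, add_eq_zero_iff_eq_neg] at h
  simp only [chain, h]; abel

lemma addOrderOf_sub_eq_card (hG : (Nat.card G).Prime) (hIJ : I ≠ J) :
    addOrderOf (J - I) = Nat.card G :=
  have := Fact.mk hG
  addOrderOf_eq_prime card_nsmul_eq_zero' (sub_ne_zero.mpr hIJ.symm)

lemma chain_injOn (hG : (Nat.card G).Prime) (hIJ : I ≠ J) :
    Set.InjOn (chain I J) (Set.Iio (Nat.card G)) := by
  intro r hr s hs h
  rw [Set.mem_Iio, ← addOrderOf_sub_eq_card hG hIJ] at hr hs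
  exact nsmul_injOn_Iio_addOrderOf hr hs (add_left_cancel h)

lemma chain_ne_of_ne (hG : (Nat.card G).Prime) (hIJ : I ≠ J) {r s : ℕ} {x : G}
    (hsx : chain I J s = x) (hr : r < Nat.card G) (hs : s < Nat.card G) (h : r ≠ s) :
    chain I J r ≠ x :=
  fun e => h (chain_injOn hG hIJ hr hs (e.trans hsx.symm))

lemma exists_chain_eq [Finite G] [DecidableEq G] (hG : (Nat.card G).Prime) (hIJ : I ≠ J) (x : G) :
    ∃ r < Nat.card G, chain I J r = x := by
  have := Fact.mk hG
  obtain ⟨r, hr, hrx⟩ := mem_image.mp <| mem_multiples_iff_mem_range_addOrderOf.mp <|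
    mem_multiples_of_prime_card rfl (g' := x - J) (sub_ne_zero.mpr hIJ.symm)
  refine ⟨r, addOrderOf_sub_eq_card hG hIJ ▸ mem_range.mp hr, ?_⟩
  simp only [chain, hrx, add_sub_cancel]

/-- The values `X s(J, T 0), X s(I, T 1), X s(J, T 1), X s(I, T 2), …` along the walk
`T = chain I J`; consecutive terms are linked alternately by a diagonal check
(`I + T (r + 1) = J + T r`) and by the neighbourhood check at `T r`. -/
def interleave (X : Sym2 G → ZMod 2) (I J : G) (k : ℕ) : ZMod 2 :=
  if k % 2 = 0 then X s(J, chain I J (k / 2)) else X s(I, chain I J (k / 2 + 1))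

variable {X : Sym2 G → ZMod 2}

@[simp] lemma interleave_two_mul (r : ℕ) : interleave X I J (2 * r) = X s(J, chain I J r) := by
  simp [interleave]

@[simp] lemma interleave_two_mul_add_one (r : ℕ) :
    interleave X I J (2 * r + 1) = X s(I, chain I J (r + 1)) := by
  simp [interleave, Nat.add_div]

lemma interleave_zero : interleave X I J 0 = X s(J, J) := by
  simp [interleave]

lemma interleave_two_mul_card_sub_three [Finite G] (hG : (Nat.card G).Prime) :
    interleave X I J (2 * Nat.card G - 3) = X s(I, I) := by
  obtain ⟨m, hm⟩ : ∃ m, Nat.card G = m + 2 := ⟨Nat.card G - 2, by have := hG.two_le; omega⟩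
  rw [show 2 * Nat.card G - 3 = 2 * m + 1 by omega, interleave_two_mul_add_one,
    show m + 1 = Nat.card G - 1 by omega, chain_card_sub_one]

end Walk

section Path

lemma eq_of_forall_succ_eq {α : Type*} {v : ℕ → α} {a b : ℕ}
    (h : ∀ k, a ≤ k → k < b → v (k + 1) = v k) {k : ℕ} (hak : a ≤ k) (hkb : k ≤ b) :
    v k = v a := by
  induction k, hak using Nat.le_induction with
  | base => rfl
  | succ k hak ih => rw [h k hak (by omega), ih (by omega)]

lemma eq_zero_of_forall_succ_eq {v : ℕ → ZMod 2} {a b : ℕ}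
    (h : ∀ k, a ≤ k → k < b → v (k + 1) = v k) (hab : a ≤ b) (h0 : v a = 0 ∨ v b = 0)
    {k : ℕ} (hak : a ≤ k) (hkb : k ≤ b) : v k = 0 := by
  rw [eq_of_forall_succ_eq h hak hkb]
  rcases h0 with h0 | h0
  · exact h0
  · rwa [← eq_of_forall_succ_eq h hab le_rfl]

structure IsBrokenPath (v : ℕ → ZMod 2) (L p q : ℕ) : Prop where
  one_le : 1 ≤ p
  two_mul_lt : 2 * p < L
  ne : p ≠ q
  one_le' : 1 ≤ q
  two_mul_le' : 2 * q ≤ L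
  before : v (2 * p - 2) = 0
  after : v (2 * p + 1) = 0
  step : ∀ k < L, k ≠ 2 * p - 2 → k ≠ 2 * p - 1 → k ≠ 2 * p → k ≠ 2 * q - 1 → v (k + 1) = v k

namespace IsBrokenPath

variable {v : ℕ → ZMod 2} {L p q : ℕ}

lemma eq_zero_on (hv : IsBrokenPath v L p q) {a b : ℕ} (hab : a ≤ b) (hbL : b ≤ L)
    (hunbroken : ∀ k, a ≤ k → k < b →
      k ≠ 2 * p - 2 ∧ k ≠ 2 * p - 1 ∧ k ≠ 2 * p ∧ k ≠ 2 * q - 1)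
    (hzero : v a = 0 ∨ v b = 0) {k : ℕ} (hak : a ≤ k) (hkb : k ≤ b) : v k = 0 :=
  eq_zero_of_forall_succ_eq
    (fun k hak hkb => have h := hunbroken k hak hkb
      hv.step k (by omega) h.1 h.2.1 h.2.2.1 h.2.2.2) hab hzero hak hkb

lemma head_eq_zero (hv : IsBrokenPath v L p q) (hpq : p < q) : v 0 = 0 :=
  hv.eq_zero_on (b := 2 * p - 2) (Nat.zero_le _) (by have := hv.two_mul_lt; omega)
    (fun _ _ _ => by omega) (Or.inr hv.before) le_rfl (Nat.zero_le _)

lemma last_eq_zero (hv : IsBrokenPath v L p q) (hqp : q < p) : v L = 0 :=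
  hv.eq_zero_on hv.two_mul_lt le_rfl (fun _ _ _ => by omega) (Or.inl hv.after) hv.two_mul_lt
    le_rfl

lemma eq_zero (hv : IsBrokenPath v L p q) (h0 : v 0 = 0) (hL : v L = 0) {k : ℕ} (hk : k ≤ L)
    (hk1 : k ≠ 2 * p - 1) (hk2 : k ≠ 2 * p) : v k = 0 := by
  have := hv.one_le; have := hv.two_mul_lt; have := hv.one_le'; have := hv.two_mul_le'
  rcases lt_or_gt_of_ne hv.ne with hpq | hqp
  · by_cases hk3 : k ≤ 2 * p - 2
    · exact hv.eq_zero_on (by omega) (by omega) (fun _ _ _ => by omega) (Or.inl h0)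
        (Nat.zero_le k) hk3
    by_cases hk4 : k ≤ 2 * q - 1
    · exact hv.eq_zero_on (by omega) (by omega) (fun _ _ _ => by omega) (Or.inl hv.after)
        (by omega) hk4
    · exact hv.eq_zero_on (a := 2 * q) (by omega) le_rfl (fun _ _ _ => by omega) (Or.inr hL)
        (by omega) hk
  · by_cases hk3 : k ≤ 2 * q - 1
    · exact hv.eq_zero_on (by omega) (by omega) (fun _ _ _ => by omega) (Or.inl h0)
        (Nat.zero_le k) hk3
    by_cases hk4 : k ≤ 2 * p - 2
    · exact hv.eq_zero_on (a := 2 * q) (by omega) (by omega) (fun _ _ _ => by omega)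
        (Or.inr hv.before) (by omega) hk4
    · exact hv.eq_zero_on (a := 2 * p + 1) (by omega) le_rfl (fun _ _ _ => by omega)
        (Or.inr hL) (by omega) hk

end IsBrokenPath

end Path

section Cases

variable {G : Type*} [AddCommGroup G] [DecidableEq G] [Fintype G]

namespace IsErasedHalf

variable {I J c c' : G} {X : Sym2 G → ZMod 2}

/-- Next to `c = chain I J p` the diagonal checks lose their `c`-term: this breaks the path around
`2 * p` and leaves a zero on either side. At `c' = chain I J q` only the neighbourhood check is
missing. -/
lemma isBrokenPath (H : IsErasedHalf I J c c' X) (hG : (Nat.card G).Prime) (hcc' : c ≠ c')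
    (hIc : I ≠ c) (hIc' : I ≠ c') (hJc : J ≠ c) (hJc' : J ≠ c') {p q : ℕ}
    (hp : chain I J p = c) (hq : chain I J q = c') (hpN : p < Nat.card G)
    (hqN : q < Nat.card G) : IsBrokenPath (interleave X I J) (2 * Nat.card G - 3) p q := by
  set N := Nat.card G
  have hN : 0 < N := Nat.card_pos
  have ne_c {r : ℕ} (hr : r < N) (h : r ≠ p) : c ∉ s(I, chain I J r) ∧ c ∉ s(J, chain I J r) := by
    have := (chain_ne_of_ne hG H.ne hp hr hpN h).symm
    simp [Sym2.mem_iff, hIc.symm, hJc.symm, this]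
  have hp0 : p ≠ 0 := fun h => hJc (by rw [← hp, h, chain_zero])
  have hq0 : q ≠ 0 := fun h => hJc' (by rw [← hq, h, chain_zero])
  have hp1 : p ≠ N - 1 := fun h => hIc (by rw [← hp, h, chain_card_sub_one])
  have hq1 : q ≠ N - 1 := fun h => hIc' (by rw [← hq, h, chain_card_sub_one])
  have hpq : p ≠ q := fun h => hcc' (by rw [← hp, ← hq, h])
  have hW : X s(c, c') = 0 :=
    H.vanishesAway _ (by simp [Sym2.mem_iff, hIc, hIc']) (by simp [Sym2.mem_iff, hJc, hJc'])
  refine ⟨by omega, by omega, hpq, by omega, by omega, ?_, ?_, ?_⟩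
  · obtain ⟨r, rfl⟩ : ∃ r, p = r + 1 := ⟨p - 1, by omega⟩
    rw [show 2 * (r + 1) - 2 = 2 * r by omega, interleave_two_mul, ← hW]
    exact H.apply_right_eq_extra (add_chain_succ r) (hp ▸ hJc.symm) (by simp [hp])
      (ne_c (by omega) (by omega)).2
  · rw [interleave_two_mul_add_one, ← hW]
    exact H.swap.apply_right_eq_extra (add_chain_succ p).symm (hp ▸ hIc.symm) (by simp [hp])
      (ne_c (by omega) (by omega)).1
  · intro k hk hk1 hk2 hk3 hk4
    obtain ⟨r, rfl | rfl⟩ := Nat.even_or_odd' k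
    · rw [interleave_two_mul_add_one, interleave_two_mul, ← CharTwo.add_eq_zero,
        H.add_eq_extra (add_chain_succ r)
          (chain_ne_of_ne hG H.ne chain_zero (by omega) hN (by omega))
          (ne_c (by omega) (by omega)).1 (ne_c (by omega) (by omega)).2, hW]
    · rw [show 2 * r + 1 + 1 = 2 * (r + 1) by ring, interleave_two_mul,
        interleave_two_mul_add_one]
      exact (H.cross_eq hIc' hJc'
        (chain_ne_of_ne hG H.ne chain_card_sub_one (by omega) (by omega) (by omega))
        (chain_ne_of_ne hG H.ne chain_zero (by omega) hN (by omega))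
        (chain_ne_of_ne hG H.ne hp (by omega) hpN (by omega))
        (chain_ne_of_ne hG H.ne hq (by omega) hqN (by omega))).symm

lemma eq_zero_of_isBrokenPath (H : IsErasedHalf I J c c' X) (hG : (Nat.card G).Prime)
    (hcc' : c ≠ c') (hIc : I ≠ c) (hIc' : I ≠ c') (hJc : J ≠ c) (hJc' : J ≠ c') {p q : ℕ}
    (hp : chain I J p = c)
    (hv : IsBrokenPath (interleave X I J) (2 * Nat.card G - 3) p q)
    (hI : X s(I, I) = 0) (hJ : X s(J, J) = 0) : X = 0 := by
  have hIJ : X s(I, J) = 0 := by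
    simpa [Sym2.mem_iff, hIc.symm, hJc.symm, H.vanishesAway s(c, c')
      (by simp [Sym2.mem_iff, hIc, hIc']) (by simp [Sym2.mem_iff, hJc, hJc'])] using H.diag_pair
  have h0 : interleave X I J 0 = 0 := interleave_zero.trans hJ
  have hL : interleave X I J (2 * Nat.card G - 3) = 0 :=
    (interleave_two_mul_card_sub_three hG).trans hI
  have hp0 : p ≠ 0 := fun h => hJc (by rw [← hp, h, chain_zero])
  have hleft (a : G) (ha : a ≠ c) : X s(I, a) = 0 := by
    obtain ⟨r, hrN, rfl⟩ := exists_chain_eq hG H.ne a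
    rcases Nat.eq_zero_or_pos r with rfl | hr0
    · rwa [chain_zero]
    have := hv.eq_zero h0 hL (k := 2 * (r - 1) + 1) (by omega)
      (by rintro h; exact ha (by rw [← hp]; congr 1; omega)) (by omega)
    rwa [interleave_two_mul_add_one, Nat.sub_add_cancel hr0] at this
  have hright (b : G) (hb : b ≠ c) : X s(J, b) = 0 := by
    obtain ⟨r, hrN, rfl⟩ := exists_chain_eq hG H.ne b
    by_cases hr : r = Nat.card G - 1
    · rw [hr, chain_card_sub_one, Sym2.eq_swap, hIJ]
    have := hv.eq_zero h0 hL (k := 2 * r) (by omega) (by omega)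
      (by rintro h; exact hb (by rw [← hp]; congr 1; omega))
    rwa [interleave_two_mul] at this
  refine H.eq_zero (fun a => ?_) (fun b => ?_)
  · by_cases ha : a = c
    · exact ha ▸ H.apply_eq_zero_of_nbhd hIc hIc' (ha ▸ hcc') fun ℓ _ hℓ => hleft ℓ (ha ▸ hℓ)
    · exact hleft a ha
  · by_cases hb : b = c
    · exact hb ▸ H.apply_eq_zero_of_nbhd hJc hJc' (hb ▸ hcc') fun ℓ _ hℓ => hright ℓ (hb ▸ hℓ)
    · exact hright b hb

end IsErasedHalf

/-- `X` and `Y` are the lower and upper triangles of a labeling that vanishes off the edges at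
`I` and `J`; the triangles share exactly the self-loops. -/
structure DoubleErasure (I J c c' : G) (X Y : Sym2 G → ZMod 2) : Prop where
  lower : IsErasedHalf I J c c' X
  upper : IsErasedHalf I J c' c Y
  ne : c ≠ c'
  loop_left : X s(I, I) = Y s(I, I)
  loop_right : X s(J, J) = Y s(J, J)

namespace DoubleErasure

variable {I J c c' : G} {X Y : Sym2 G → ZMod 2}

lemma swap (E : DoubleErasure I J c c' X Y) : DoubleErasure J I c c' X Y :=
  ⟨E.lower.swap, E.upper.swap, E.ne, E.loop_right, E.loop_left⟩

lemma mirror (E : DoubleErasure I J c c' X Y) : DoubleErasure I J c' c Y X :=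
  ⟨E.upper, E.lower, E.ne.symm, E.loop_left.symm, E.loop_right.symm⟩

lemma lower_eq_zero_of_eq_of_eq (E : DoubleErasure I J c c' X Y) (hI : I = c) (hJ : J = c') :
    X = 0 := by
  have hIJ := E.lower.ne
  have hJI : X s(J, I) = 0 := by
    rw [hI, hJ, Sym2.eq_swap, E.lower.extra_eq_zero (by simp [hI])]
  refine E.lower.eq_zero (fun a => ?_) fun b => ?_
  · by_cases haI : a = I
    · rw [haI, E.loop_left, E.upper.swap.apply_right_eq_zero_of_eq hJ hIJ]
    by_cases haJ : a = J
    · rw [haJ, Sym2.eq_swap, hJI]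
    exact E.lower.cross_eq_zero hJ haI haJ (hI ▸ haI)
  · by_cases hbI : b = I
    · rw [hbI, hJI]
    exact E.lower.apply_right_eq_zero_of_eq hI hbI

theorem eq_zero_of_eq_of_eq (E : DoubleErasure I J c c' X Y) (hI : I = c) (hJ : J = c') :
    X = 0 ∧ Y = 0 :=
  ⟨E.lower_eq_zero_of_eq_of_eq hI hJ, E.mirror.swap.lower_eq_zero_of_eq_of_eq hJ hI⟩

lemma upper_apply_left_eq_zero (E : DoubleErasure I J c c' X Y) (hJ : J = c') (hIc : I ≠ c)
    (a : G) : Y s(I, a) = 0 := by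
  have hIc' : I ≠ c' := hJ ▸ E.lower.ne
  have hJc : J ≠ c := hJ ▸ E.ne.symm
  have h (a : G) (ha : a ≠ J) : Y s(I, a) = 0 := E.upper.swap.apply_right_eq_zero_of_eq hJ ha
  by_cases ha : a = J
  · rw [ha]
    exact E.upper.apply_eq_zero_of_nbhd hIc' hIc hJc fun ℓ _ hℓ => h ℓ hℓ
  · exact h a ha

lemma lower_eq_zero_of_right_eq (E : DoubleErasure I J c c' X Y) (hJ : J = c') (hIc : I ≠ c) :
    X = 0 := by
  have hIJ := E.lower.ne
  have hIc' : I ≠ c' := hJ ▸ hIJ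
  have hJc : J ≠ c := hJ ▸ E.ne.symm
  have hII : X s(I, I) = 0 := by rw [E.loop_left, E.upper_apply_left_eq_zero hJ hIc]
  have hgen {a : G} (haJ : a ≠ J) (hac : a ≠ c) : X s(I, a) = 0 := by
    by_cases haI : a = I
    · rwa [haI]
    exact E.lower.cross_eq_zero hJ haI haJ hac
  have hW : X s(c, c') = 0 := by
    have hd : J - I ≠ 0 := sub_ne_zero.mpr hIJ.symm
    rw [← E.lower.swap.apply_right_eq_extra (a := c) (b := c + (J - I)) (by abel)
      (by rintro rfl; exact hIc rfl) (by simp) (by simp [Sym2.mem_iff, hIc.symm, hd])]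
    exact hgen (fun h => hIc.symm ((eq_sub_of_add_eq h).trans (sub_sub_cancel J I)))
      (by simpa using hd)
  have hXI (a : G) : X s(I, a) = 0 := by
    by_cases hac : a = c
    · rw [hac]
      exact E.lower.apply_eq_zero_of_nbhd hIc hIc' E.ne fun ℓ hℓ hℓc => hgen (hJ ▸ hℓ) hℓc
    by_cases haJ : a = J
    · simpa [haJ, hW, Sym2.mem_iff, hIc.symm, hJc.symm] using E.lower.diag_pair
    exact hgen haJ hac
  refine E.lower.eq_zero hXI fun b => ?_
  by_cases hbI : b = I
  · rw [hbI, Sym2.eq_swap, hXI]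
  by_cases hbc : b = c
  · rw [hbc, hJ, Sym2.eq_swap, hW]
  simpa [hXI, hW, Sym2.mem_iff, hJc.symm, Ne.symm hbc] using
    E.lower.diag_cross (a := b + (J - I)) (b := b) (by abel)
      (fun h => hbI ((eq_sub_of_add_eq h).trans (sub_sub_cancel J I)))

theorem eq_zero_of_right_eq (E : DoubleErasure I J c c' X Y) (hJ : J = c') (hIc : I ≠ c) :
    X = 0 ∧ Y = 0 := by
  have hX := E.lower_eq_zero_of_right_eq hJ hIc
  have hJc : J ≠ c := hJ ▸ E.ne.symm
  have hYI := E.upper_apply_left_eq_zero hJ hIc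
  refine ⟨hX, E.upper.eq_zero hYI fun b => ?_⟩
  by_cases hbI : b = I
  · rw [hbI, Sym2.eq_swap, hYI]
  by_cases hbJ : b = J
  · rw [hbJ, ← E.loop_right, hX, Pi.zero_apply]
  by_cases hbc : b = c
  · rw [hbc, hJ, E.upper.extra_eq_zero (by simp [hJ])]
  rw [← E.upper.cross_eq hIc hJc hbI hbJ (hJ ▸ hbJ) hbc, hYI]

theorem eq_zero_of_generic (E : DoubleErasure I J c c' X Y) (hG : (Nat.card G).Prime)
    (hIc : I ≠ c) (hIc' : I ≠ c') (hJc : J ≠ c) (hJc' : J ≠ c') : X = 0 ∧ Y = 0 := by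
  obtain ⟨p, hpN, hp⟩ := exists_chain_eq hG E.lower.ne c
  obtain ⟨q, hqN, hq⟩ := exists_chain_eq hG E.lower.ne c'
  have hX := E.lower.isBrokenPath hG E.ne hIc hIc' hJc hJc' hp hq hpN hqN
  have hY := E.upper.isBrokenPath hG E.ne.symm hIc' hIc hJc' hJc hq hp hqN hpN
  have hloops : X s(I, I) = 0 ∧ X s(J, J) = 0 := by
    rcases lt_or_gt_of_ne hX.ne with hpq | hqp
    · exact ⟨E.loop_left.trans
        ((interleave_two_mul_card_sub_three hG).symm.trans (hY.last_eq_zero hpq)),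
        interleave_zero.symm.trans (hX.head_eq_zero hpq)⟩
    · exact ⟨(interleave_two_mul_card_sub_three hG).symm.trans (hX.last_eq_zero hqp),
        E.loop_right.trans (interleave_zero.symm.trans (hY.head_eq_zero hqp))⟩
  exact ⟨E.lower.eq_zero_of_isBrokenPath hG E.ne hIc hIc' hJc hJc' hp hX hloops.1 hloops.2,
    E.upper.eq_zero_of_isBrokenPath hG E.ne.symm hIc' hIc hJc' hJc hq hY
      (E.loop_left ▸ hloops.1) (E.loop_right ▸ hloops.2)⟩

theorem eq_zero (E : DoubleErasure I J c c' X Y) (hG : (Nat.card G).Prime) :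
    X = 0 ∧ Y = 0 := by
  by_cases hJc' : J = c'
  · by_cases hIc : I = c
    · exact E.eq_zero_of_eq_of_eq hIc hJc'
    · exact E.eq_zero_of_right_eq hJc' hIc
  by_cases hJc : J = c
  · by_cases hIc' : I = c'
    · exact (E.mirror.eq_zero_of_eq_of_eq hIc' hJc).symm
    · exact (E.mirror.eq_zero_of_right_eq hJc hIc').symm
  by_cases hIc' : I = c'
  · exact E.swap.eq_zero_of_right_eq hIc' hJc
  by_cases hIc : I = c
  · exact (E.swap.mirror.eq_zero_of_right_eq hIc hJc').symm
  exact E.eq_zero_of_generic hG hIc hIc' hJc hJc'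

end DoubleErasure

end Cases

section Code

variable {n : ℕ} [NeZero n] (hn : 5 ≤ n)

theorem isHalfCodeword_of_mem_CG4 {L : Fin n → Fin n → ZMod 2} (hL : L ∈ CG4 n hn) :
    IsHalfCodeword (⟨n - 2, by omega⟩ : Fin n) ⟨n - 1, by omega⟩ (lowerHalf L) ∧
      IsHalfCodeword (⟨n - 1, by omega⟩ : Fin n) ⟨n - 2, by omega⟩ (lowerHalf (flip L)) := by
  obtain ⟨ha, hb, hc, hd⟩ := hL
  have hnbhd (h : Fin n) : (h : ℕ) < n - 2 ↔ h ≠ ⟨n - 2, by omega⟩ ∧ h ≠ ⟨n - 1, by omega⟩ := by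
    simp only [ne_eq, Fin.ext_iff]; omega
  have hlast : univ.filter (fun ℓ : Fin n => (ℓ : ℕ) < n - 1)
      = univ.filter (· ≠ ⟨n - 1, by omega⟩) := by
    ext ℓ; simp only [mem_filter, mem_univ, true_and, ne_eq, Fin.ext_iff]; omega
  have hsecond : univ.filter (fun ℓ : Fin n => (ℓ : ℕ) ≠ n - 2)
      = univ.filter (· ≠ ⟨n - 2, by omega⟩) := by
    ext ℓ; simp only [mem_filter, mem_univ, true_and, ne_eq, Fin.ext_iff]
  have hextra : s((⟨n - 2, by omega⟩ : Fin n), ⟨n - 1, by omega⟩).sup = ⟨n - 1, by omega⟩ ∧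
      s((⟨n - 2, by omega⟩ : Fin n), ⟨n - 1, by omega⟩).inf = ⟨n - 2, by omega⟩ :=
    ⟨max_eq_right (Fin.mk_le_mk.mpr (by omega)), min_eq_left (Fin.mk_le_mk.mpr (by omega))⟩
  refine ⟨⟨fun h h1 h2 => ?_, fun m => ?_⟩, ⟨fun h h1 h2 => ?_, fun m => ?_⟩⟩
  · rw [← hlast]; exact ha h ((hnbhd h).mpr ⟨h1, h2⟩)
  · rw [← sum_filter_snd_le_fst_eq_sum_sym2, lowerHalf, hextra.1, hextra.2, ← hb m m.isLt]
    congr 2; ext p; simp [Sym2.mem_iff, Fin.ext_iff, Fin.val_add, eq_comm, and_assoc]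
  · rw [← hsecond]; exact hc h ((hnbhd h).mpr ⟨h2, h1⟩)
  · rw [← sum_filter_fst_le_snd_eq_sum_sym2, Sym2.eq_swap, lowerHalf, hextra.1, hextra.2,
      ← hd m m.isLt]
    congr 2; ext p; simp [Sym2.mem_iff, Fin.ext_iff, Fin.val_add, eq_comm, and_assoc]; omega

theorem doubleErasure_of_mem_CG4 {i j : Fin n} (hij : i ≠ j) {L1 L2 : Fin n → Fin n → ZMod 2}
    (h1 : L1 ∈ CG4 n hn) (h2 : L2 ∈ CG4 n hn)
    (hagree : ∀ k ℓ : Fin n, k ≠ i → k ≠ j → ℓ ≠ i → ℓ ≠ j → L1 k ℓ = L2 k ℓ) :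
    DoubleErasure i j ⟨n - 2, by omega⟩ ⟨n - 1, by omega⟩ (lowerHalf (L1 - L2))
      (lowerHalf (flip (L1 - L2))) := by
  obtain ⟨hX1, hY1⟩ := isHalfCodeword_of_mem_CG4 hn h1
  obtain ⟨hX2, hY2⟩ := isHalfCodeword_of_mem_CG4 hn h2
  have hD (k ℓ : Fin n) (hki : k ≠ i) (hkj : k ≠ j) (hℓi : ℓ ≠ i) (hℓj : ℓ ≠ j) :
      (L1 - L2) k ℓ = 0 :=
    sub_eq_zero.mpr (hagree k ℓ hki hkj hℓi hℓj)
  exact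
    { lower := { hX1.sub hX2 with ne := hij, vanishesAway := fun _ => lowerHalf_eq_zero hD }
      upper :=
        { hY1.sub hY2 with
          ne := hij
          vanishesAway := fun _ => lowerHalf_eq_zero fun k ℓ hki hkj hℓi hℓj =>
            hD ℓ k hℓi hℓj hki hkj }
      ne := by simp only [ne_eq, Fin.ext_iff]; omega
      loop_left := (lowerHalf_flip_mk_self _ i).symm
      loop_right := (lowerHalf_flip_mk_self _ j).symm }

end Code

end CG4

open CG4

/-- Theorem 8 (correction part): for prime `n ≥ 5` the code `C_{G_4}` is a binary
double-node-erasure-correcting code: any two labelings of `C_{G_4}` agreeing on all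
ordered pairs avoiding two failed nodes `i, j` are equal. -/
theorem CG4_double_node_erasure_correcting (n : ℕ) (hn : 5 ≤ n) (hp : Nat.Prime n)
    (i j : Fin n) (hij : i ≠ j)
    (L1 L2 : Fin n → Fin n → ZMod 2) (h1 : L1 ∈ CG4 n hn) (h2 : L2 ∈ CG4 n hn)
    (hagree : ∀ k ℓ : Fin n, k ≠ i → k ≠ j → ℓ ≠ i → ℓ ≠ j → L1 k ℓ = L2 k ℓ) :
    L1 = L2 := by
  have : NeZero n := ⟨by omega⟩
  obtain ⟨hX, hY⟩ := (doubleErasure_of_mem_CG4 hn hij h1 h2 hagree).eq_zero (by rwa [Nat.card_fin])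
  exact sub_eq_zero.mp (eq_zero_of_lowerHalf_eq_zero hX hY)
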